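/- arXiv:2201.05441 — 4 statements merged into one kernel-verified Lean document; each statement's English description precedes it below -/
import Mathlib

section
/- Let d ≥ 1. For each j = 1, …, d let c_j > 0, let p_j ≥ 3 be an integer, and define equally spaced nodes m_i^j = m_1^j + (i − 1)·c_j for i = 1, …, p_j. Let η_1, …, η_d be normalized membership functions. Then for every x in the universe Ω = [m_1^1, m_{p_1}^1] × ⋯ × [m_1^d, m_{p_d}^d], the sum over all multi-indices (i_1, …, i_d) with 1 ≤ i_j ≤ p_j of ∏_{j=1}^d η_j((x_j − m_{i_j}^j)/c_j) equals 1. -/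
/-- A normalized membership function: continuous, nonnegative, even, `η 0 = 1`,
vanishing for `|x| > 1`, monotonically nonincreasing on `[0,1]`, and satisfying
the Ruspini condition `η t + η (t - 1) = 1` on `[0,1]`. -/
def IsNormalizedMembershipFunction (η : ℝ → ℝ) : Prop :=
  Continuous η ∧ (∀ x, 0 ≤ η x) ∧ (∀ x, η (-x) = η x) ∧ η 0 = 1 ∧
    (∀ x, 1 < |x| → η x = 0) ∧ AntitoneOn η (Set.Icc 0 1) ∧
    (∀ t ∈ Set.Icc (0 : ℝ) 1, η t + η (t - 1) = 1)

lemma nmf_vanish {η : ℝ → ℝ} (h : IsNormalizedMembershipFunction η) {x : ℝ}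
    (hx : 1 ≤ |x|) : η x = 0 := by
  obtain ⟨_, _, heven, h0, hvan, _, hr⟩ := h
  rcases eq_or_lt_of_le hx with h1 | h1
  · have h1' : x = 1 ∨ x = -1 := by
      rcases abs_cases x with ⟨he, _⟩ | ⟨he, _⟩
      · left; linarith
      · right; linarith
    have hη1 : η 1 = 0 := by
      have := hr 1 (by constructor <;> norm_num)
      simp [h0] at this; linarith
    rcases h1' with rfl | rfl
    · exact hη1
    · rw [← heven]; norm_num [hη1]
  · exact hvan x h1

lemma one_dim_sum {η : ℝ → ℝ} (h : IsNormalizedMembershipFunction η) {p : ℕ}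
    (hp : 3 ≤ p) {t : ℝ} (ht0 : 0 ≤ t) (ht1 : t ≤ (p - 1 : ℕ)) :
    ∑ i : Fin p, η (t - i) = 1 := by
  set k : ℕ := min ⌊t⌋.toNat (p - 2) with hkdef
  have hk2 : k ≤ p - 2 := min_le_right _ _
  have hkp : k + 1 < p := by omega
  have hfloor : ((⌊t⌋.toNat : ℤ) : ℝ) = (⌊t⌋ : ℝ) := by
    congr 1; exact Int.toNat_of_nonneg (Int.le_floor.mpr (by simpa using ht0))
  have hk1 : (k : ℝ) ≤ t := by
    have h1 : (k : ℝ) ≤ (⌊t⌋.toNat : ℝ) := by exact_mod_cast min_le_left _ _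
    have h2 : ((⌊t⌋.toNat : ℕ) : ℝ) ≤ t := by
      rw [show ((⌊t⌋.toNat : ℕ) : ℝ) = ((⌊t⌋.toNat : ℤ) : ℝ) by push_cast; ring, hfloor]
      exact Int.floor_le t
    linarith
  have hku : t ≤ (k : ℝ) + 1 := by
    rcases le_or_gt (⌊t⌋.toNat) (p - 2) with hc | hc
    · have hk : k = ⌊t⌋.toNat := by omega
      have := Int.lt_floor_add_one t
      rw [hk]
      push_cast [← hfloor]
      calc t ≤ (⌊t⌋ : ℝ) + 1 := le_of_lt this
        _ = ((⌊t⌋.toNat : ℤ) : ℝ) + 1 := by rw [hfloor]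
    · have hk : k = p - 2 := by omega
      have : ((p - 1 : ℕ) : ℝ) = (k : ℝ) + 1 := by
        rw [hk]; push_cast [Nat.cast_sub (by omega : 1 ≤ p), Nat.cast_sub (by omega : 2 ≤ p)]
        ring
      linarith [ht1, this ▸ ht1]
  set a : Fin p := ⟨k, by omega⟩
  set b : Fin p := ⟨k + 1, hkp⟩
  have hab : a ≠ b := by simp [a, b, Fin.ext_iff]
  have hzero : ∀ i ∈ Finset.univ, i ∉ ({a, b} : Finset (Fin p)) → η (t - (i : ℕ)) = 0 := by
    intro i _ hi
    simp only [Finset.mem_insert, Finset.mem_singleton] at hi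
    push_neg at hi
    obtain ⟨hia, hib⟩ := hi
    have hia' : (i : ℕ) ≠ k := fun h => hia (Fin.ext h)
    have hib' : (i : ℕ) ≠ k + 1 := fun h => hib (Fin.ext h)
    apply nmf_vanish h
    rcases lt_or_gt_of_ne hia' with hlt | hgt
    · have : (i : ℝ) + 1 ≤ (k : ℝ) := by exact_mod_cast Nat.succ_le_of_lt hlt
      rw [abs_of_nonneg (by linarith)]; linarith
    · have hge : k + 2 ≤ (i : ℕ) := by omega
      have : (k : ℝ) + 2 ≤ (i : ℝ) := by exact_mod_cast hge
      rw [abs_of_nonpos (by linarith)]; linarith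
  rw [← Finset.sum_subset (Finset.subset_univ {a, b}) hzero, Finset.sum_pair hab]
  have := (h.2.2.2.2.2.2) (t - k) ⟨by linarith, by linarith⟩
  have hb : t - ((b : Fin p) : ℕ) = (t - k) - 1 := by simp [b]; push_cast; ring
  have ha : t - ((a : Fin p) : ℕ) = t - k := by simp [a]
  rw [ha, hb]; exact this

/-- for equally spaced nodes `m i j = m₁ j + i * c j` (`i = 0, …, p j - 1`,
`p j ≥ 3`) and normalized membership functions `η j`, the rescaled translated membership
functions sum to `1` over all multi-indices, at every point `x` of the universe
`Ω = ∏ j [m₁ j, m₁ j + (p j - 1) * c j]`. -/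
theorem grid_strong_uniformity (d : ℕ) (hd : 1 ≤ d) (c : Fin d → ℝ) (hc : ∀ j, 0 < c j)
    (p : Fin d → ℕ) (hp : ∀ j, 3 ≤ p j) (m₁ : Fin d → ℝ) (η : Fin d → ℝ → ℝ)
    (hη : ∀ j, IsNormalizedMembershipFunction (η j)) (x : Fin d → ℝ)
    (hx : ∀ j, x j ∈ Set.Icc (m₁ j) (m₁ j + (p j - 1 : ℕ) * c j)) :
    ∑ i : (j : Fin d) → Fin (p j),
      ∏ j, η j ((x j - (m₁ j + (i j : ℕ) * c j)) / c j) = 1 := by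
  rw [← Fintype.prod_sum (fun j (i : Fin (p j)) => η j ((x j - (m₁ j + (i : ℕ) * c j)) / c j))]
  have : ∀ j, ∑ i : Fin (p j), η j ((x j - (m₁ j + (i : ℕ) * c j)) / c j) = 1 := by
    intro j
    set t : ℝ := (x j - m₁ j) / c j with htdef
    have harg : ∀ i : Fin (p j), (x j - (m₁ j + (i : ℕ) * c j)) / c j = t - i := by
      intro i; rw [div_eq_iff (hc j).ne', htdef, sub_mul, div_mul_cancel₀ _ (hc j).ne']; ring
    simp_rw [harg]
    obtain ⟨h1, h2⟩ := hx j
    exact one_dim_sum (hη j) (hp j)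
      (div_nonneg (by linarith) (hc j).le)
      ((div_le_iff₀ (hc j)).mpr (by linarith))
  simp [this]
end

section
/- Let d ≥ 1, let c_j > 0 for j = 1, …, d, and let η_1, …, η_d be normalized membership functions. Define μ(x) = ∏_{j=1}^d η_j(x_j/c_j) for x ∈ ℝ^d. Then: (i) μ is continuous and nonnegative on ℝ^d; (ii) μ(0) = 1; (iii) μ(x) = μ(y) whenever |x_j| = |y_j| for all j; (iv) μ(x) = 0 whenever |x_j| > c_j for some j; (v) for every x ∈ [0, c_1] × ⋯ × [0, c_d], the sum over all s ∈ {0, 1}^d of μ(x_1 − s_1·c_1, …, x_d − s_d·c_d) equals 1; and (vi) μ((1 + ε)·x) ≤ μ(x) for every x ∈ ℝ^d and every ε > 0. -/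
namespace IsNormalizedMembershipFunction

variable {η : ℝ → ℝ} (h : IsNormalizedMembershipFunction η)
include h

theorem continuous : Continuous η := h.1

theorem nonneg (x : ℝ) : 0 ≤ η x := h.2.1 x

theorem apply_neg (x : ℝ) : η (-x) = η x := h.2.2.1 x

theorem apply_zero : η 0 = 1 := h.2.2.2.1

theorem apply_eq_zero_of_one_lt_abs {x : ℝ} (hx : 1 < |x|) : η x = 0 := h.2.2.2.2.1 x hx

theorem apply_add_apply_sub_one {t : ℝ} (ht : t ∈ Set.Icc (0 : ℝ) 1) :
    η t + η (t - 1) = 1 :=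
  h.2.2.2.2.2.2 t ht

theorem apply_abs (x : ℝ) : η |x| = η x := by
  rcases abs_choice x with hx | hx <;> rw [hx]
  exact h.apply_neg x

theorem antitoneOn_Ici : AntitoneOn η (Set.Ici 0) := by
  intro a ha b hb hab
  by_cases hb1 : b ≤ 1
  · exact h.2.2.2.2.2.1 ⟨ha, hab.trans hb1⟩ ⟨hb, hb1⟩ hab
  · rw [h.apply_eq_zero_of_one_lt_abs (by rwa [abs_of_nonneg hb, ← not_le])]
    exact h.nonneg a

theorem apply_mul_le {k : ℝ} (hk : 1 ≤ k) (x : ℝ) : η (k * x) ≤ η x := by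
  rw [← h.apply_abs, ← h.apply_abs x, abs_mul, abs_of_nonneg (zero_le_one.trans hk)]
  exact h.antitoneOn_Ici (abs_nonneg x) (mul_nonneg (zero_le_one.trans hk) (abs_nonneg x))
    (le_mul_of_one_le_left (abs_nonneg x) hk)

theorem apply_div_add_apply_sub_div {c x : ℝ} (hc : 0 < c) (hx : x ∈ Set.Icc 0 c) :
    η (x / c) + η ((x - c) / c) = 1 := by
  rw [sub_div, div_self hc.ne']
  exact h.apply_add_apply_sub_one ⟨div_nonneg hx.1 hc.le, (div_le_one hc).mpr hx.2⟩

end IsNormalizedMembershipFunction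

theorem Fintype.sum_prod_eq_one {ι κ : Type*} [Fintype ι] [DecidableEq ι] [Fintype κ]
    {f : ι → κ → ℝ} (hf : ∀ i, ∑ k, f i k = 1) : ∑ s : ι → κ, ∏ i, f i (s i) = 1 := by
  rw [← Fintype.prod_sum, Finset.prod_eq_one fun i _ => hf i]

theorem product_is_strong_uniform_membership_general (d : ℕ) (c : Fin d → ℝ)
    (hc : ∀ j, 0 < c j) (η : Fin d → ℝ → ℝ)
    (hη : ∀ j, IsNormalizedMembershipFunction (η j))
    (μ : (Fin d → ℝ) → ℝ) (hμ : μ = fun x => ∏ j, η j (x j / c j)) :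
    Continuous μ ∧ (∀ x, 0 ≤ μ x) ∧
    μ 0 = 1 ∧
    (∀ x y : Fin d → ℝ, (∀ j, |x j| = |y j|) → μ x = μ y) ∧
    (∀ x : Fin d → ℝ, (∃ j, c j < |x j|) → μ x = 0) ∧
    (∀ x : Fin d → ℝ, (∀ j, x j ∈ Set.Icc 0 (c j)) →
      ∑ s : Fin d → Bool, μ (fun j => x j - (if s j then c j else 0)) = 1) ∧
    (∀ x : Fin d → ℝ, ∀ ε : ℝ, 0 < ε → μ ((1 + ε) • x) ≤ μ x) := by
  subst hμ
  refine ⟨?_, ?_, ?_, ?_, ?_, ?_, ?_⟩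
  · exact continuous_finsetProd _ fun j _ =>
      (hη j).continuous.comp ((continuous_apply (A := fun _ => ℝ) j).div_const (c j))
  · exact fun x => Finset.prod_nonneg fun j _ => (hη j).nonneg _
  · exact Finset.prod_eq_one fun j _ => by simp [(hη j).apply_zero]
  · intro x y hxy
    refine Finset.prod_congr rfl fun j _ => ?_
    rw [← (hη j).apply_abs, ← (hη j).apply_abs (y j / c j), abs_div, abs_div, hxy j]
  · rintro x ⟨j, hj⟩
    refine Finset.prod_eq_zero (Finset.mem_univ j) ((hη j).apply_eq_zero_of_one_lt_abs ?_)
    rwa [abs_div, abs_of_pos (hc j), one_lt_div (hc j)]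
  · intro x hx
    refine Fintype.sum_prod_eq_one (f := fun j (b : Bool) => η j ((x j - if b then c j else 0) / c j))
      fun j => ?_
    simpa [add_comm] using (hη j).apply_div_add_apply_sub_div (hc j) (hx j)
  · intro x ε hε
    refine Finset.prod_le_prod (fun j _ => (hη j).nonneg _) fun j _ => ?_
    rw [Pi.smul_apply, smul_eq_mul, mul_div_assoc]
    exact (hη j).apply_mul_le (by linarith) _

/-- Theorem 2 of the paper: the product
`μ x = ∏ j, η j (x j / c j)` of normalized membership functions rescaled by the
grid spacings `c j` is the centralized membership function of a `d`-dimensional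
strong-uniform fuzzy partition: it is (i) continuous and nonnegative, (ii) equal to
`1` at the origin, (iii) mirror symmetric in each coordinate, (iv) supported in the
box `∏ j [-c j, c j]`, (v) strongly uniform on each cell `∏ j [0, c j]`, and
(vi) radially monotone. -/
theorem product_is_strong_uniform_membership (d : ℕ) (hd : 1 ≤ d) (c : Fin d → ℝ)
    (hc : ∀ j, 0 < c j) (η : Fin d → ℝ → ℝ)
    (hη : ∀ j, IsNormalizedMembershipFunction (η j))
    (μ : (Fin d → ℝ) → ℝ) (hμ : μ = fun x => ∏ j, η j (x j / c j)) :
    Continuous μ ∧ (∀ x, 0 ≤ μ x) ∧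
    μ 0 = 1 ∧
    (∀ x y : Fin d → ℝ, (∀ j, |x j| = |y j|) → μ x = μ y) ∧
    (∀ x : Fin d → ℝ, (∃ j, c j < |x j|) → μ x = 0) ∧
    (∀ x : Fin d → ℝ, (∀ j, x j ∈ Set.Icc 0 (c j)) →
      ∑ s : Fin d → Bool, μ (fun j => x j - (if s j then c j else 0)) = 1) ∧
    (∀ x : Fin d → ℝ, ∀ ε : ℝ, 0 < ε → μ ((1 + ε) • x) ≤ μ x) :=
  product_is_strong_uniform_membership_general d c hc η hη μ hμ
end

section
/- Define f₁(x, y) = max(0, min(1 − |x|, 1 − |y|)), f₂(x, y) = max(0, min(1 − |x − y|, 1 − |x + y|)), and η(x, y) = (f₁(x, y) + f₂(x, y))/2. Then for every (x, y) ∈ [0, 1]², η(x, y) + η(x − 1, y) + η(x, y − 1) + η(x − 1, y − 1) = 1. -/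
private lemma mmA (a b : ℝ) (h : a ≤ b) (h0 : 0 ≤ a) : 0 ⊔ a ⊓ b = a := by
  rw [min_eq_left h]; exact max_eq_right h0

private lemma mmB (a b : ℝ) (h : b ≤ a) (h0 : 0 ≤ b) : 0 ⊔ a ⊓ b = b := by
  rw [min_eq_right h]; exact max_eq_right h0

private lemma mzA (a b : ℝ) (h : a ≤ 0) : 0 ⊔ a ⊓ b = 0 :=
  max_eq_left (le_trans (min_le_left a b) h)

private lemma mzB (a b : ℝ) (h : b ≤ 0) : 0 ⊔ a ⊓ b = 0 :=
  max_eq_left (le_trans (min_le_right a b) h)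

/-- strong-uniformity of the variant two-dimensional triangular fuzzy
partition (Eqs. (12)–(14) of the paper): the centralized membership function
`η = (f₁ + f₂) / 2` sums to `1` over the four membership functions around a unit bin. -/
theorem variant_triangular_2d_strong_uniformity
    (f₁ f₂ η : ℝ → ℝ → ℝ)
    (hf₁ : f₁ = fun x y => max 0 (min (1 - |x|) (1 - |y|)))
    (hf₂ : f₂ = fun x y => max 0 (min (1 - |x - y|) (1 - |x + y|)))
    (hη : η = fun x y => (f₁ x y + f₂ x y) / 2)
    (x y : ℝ) (hx : x ∈ Set.Icc (0 : ℝ) 1) (hy : y ∈ Set.Icc (0 : ℝ) 1) :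
    η x y + η (x - 1) y + η x (y - 1) + η (x - 1) (y - 1) = 1 := by
  obtain ⟨hx0, hx1⟩ := hx
  obtain ⟨hy0, hy1⟩ := hy
  subst hη hf₁ hf₂
  simp only
  rcases le_total x y with h1 | h1 <;> rcases le_total (x + y) 1 with h2 | h2 <;>
    rw [abs_of_nonneg hx0, abs_of_nonneg hy0, abs_of_nonpos (by linarith : x - 1 ≤ 0),
      abs_of_nonpos (by linarith : y - 1 ≤ 0),
      abs_of_nonneg (by linarith : (0:ℝ) ≤ x + y),
      abs_of_nonpos (by linarith : x - 1 - y ≤ 0),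
      abs_of_nonneg (by linarith : (0:ℝ) ≤ x - (y - 1)),
      abs_of_nonpos (by linarith : x - 1 + (y - 1) ≤ 0)]
  · rw [abs_of_nonpos (by linarith : x - y ≤ 0), abs_of_nonpos (by linarith : x - 1 + y ≤ 0),
      abs_of_nonpos (by linarith : x + (y - 1) ≤ 0),
      abs_of_nonpos (by linarith : x - 1 - (y - 1) ≤ 0),
      mmB (1 - x) (1 - y) (by linarith) (by linarith),
      mmB (1 - -(x - y)) (1 - (x + y)) (by linarith) (by linarith),
      mmA (1 - -(x - 1)) (1 - y) (by linarith) (by linarith),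
      mzA (1 - -(x - 1 - y)) (1 - -(x - 1 + y)) (by linarith),
      mmB (1 - x) (1 - -(y - 1)) (by linarith) (by linarith),
      mmA (1 - (x - (y - 1))) (1 - -(x + (y - 1))) (by linarith) (by linarith),
      mmA (1 - -(x - 1)) (1 - -(y - 1)) (by linarith) (by linarith),
      mzB (1 - -(x - 1 - (y - 1))) (1 - -(x - 1 + (y - 1))) (by linarith)]
    ring
  · rw [abs_of_nonpos (by linarith : x - y ≤ 0), abs_of_nonneg (by linarith : (0:ℝ) ≤ x - 1 + y),
      abs_of_nonneg (by linarith : (0:ℝ) ≤ x + (y - 1)),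
      abs_of_nonpos (by linarith : x - 1 - (y - 1) ≤ 0),
      mmB (1 - x) (1 - y) (by linarith) (by linarith),
      mzB (1 - -(x - y)) (1 - (x + y)) (by linarith),
      mmB (1 - -(x - 1)) (1 - y) (by linarith) (by linarith),
      mzA (1 - -(x - 1 - y)) (1 - (x - 1 + y)) (by linarith),
      mmA (1 - x) (1 - -(y - 1)) (by linarith) (by linarith),
      mmA (1 - (x - (y - 1))) (1 - (x + (y - 1))) (by linarith) (by linarith),
      mmA (1 - -(x - 1)) (1 - -(y - 1)) (by linarith) (by linarith),
      mmB (1 - -(x - 1 - (y - 1))) (1 - -(x - 1 + (y - 1))) (by linarith) (by linarith)]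
    ring
  · rw [abs_of_nonneg (by linarith : (0:ℝ) ≤ x - y), abs_of_nonpos (by linarith : x - 1 + y ≤ 0),
      abs_of_nonpos (by linarith : x + (y - 1) ≤ 0),
      abs_of_nonneg (by linarith : (0:ℝ) ≤ x - 1 - (y - 1)),
      mmA (1 - x) (1 - y) (by linarith) (by linarith),
      mmB (1 - (x - y)) (1 - (x + y)) (by linarith) (by linarith),
      mmA (1 - -(x - 1)) (1 - y) (by linarith) (by linarith),
      mmA (1 - -(x - 1 - y)) (1 - -(x - 1 + y)) (by linarith) (by linarith),
      mmB (1 - x) (1 - -(y - 1)) (by linarith) (by linarith),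
      mzA (1 - (x - (y - 1))) (1 - -(x + (y - 1))) (by linarith),
      mmB (1 - -(x - 1)) (1 - -(y - 1)) (by linarith) (by linarith),
      mzB (1 - (x - 1 - (y - 1))) (1 - -(x - 1 + (y - 1))) (by linarith)]
    ring
  · rw [abs_of_nonneg (by linarith : (0:ℝ) ≤ x - y), abs_of_nonneg (by linarith : (0:ℝ) ≤ x - 1 + y),
      abs_of_nonneg (by linarith : (0:ℝ) ≤ x + (y - 1)),
      abs_of_nonneg (by linarith : (0:ℝ) ≤ x - 1 - (y - 1)),
      mmA (1 - x) (1 - y) (by linarith) (by linarith),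
      mzB (1 - (x - y)) (1 - (x + y)) (by linarith),
      mmB (1 - -(x - 1)) (1 - y) (by linarith) (by linarith),
      mmA (1 - -(x - 1 - y)) (1 - (x - 1 + y)) (by linarith) (by linarith),
      mmA (1 - x) (1 - -(y - 1)) (by linarith) (by linarith),
      mzA (1 - (x - (y - 1))) (1 - (x + (y - 1))) (by linarith),
      mmB (1 - -(x - 1)) (1 - -(y - 1)) (by linarith) (by linarith),
      mmB (1 - (x - 1 - (y - 1))) (1 - -(x - 1 + (y - 1))) (by linarith) (by linarith)]
    ring
end

section
/- Define f₁(x, y) = max(0, min(1 − |x|, 1 − |y|)), f₂(x, y) = max(0, min(1 − |x − y|, 1 − |x + y|)), and η(x, y) = (f₁(x, y) + f₂(x, y))/2. Then there do not exist functions g : ℝ → ℝ and h : ℝ → ℝ such that η(x, y) = g(x)·h(y) for all (x, y) ∈ ℝ². -/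
/-- the variant two-dimensional strong-uniform membership function
`η = (f₁ + f₂) / 2` of Eqs. (12)–(14) is not of product form: there are no functions
`g, h : ℝ → ℝ` with `η x y = g x * h y` for all `x, y`. Hence the product construction
of Theorem 2 is sufficient but not necessary. -/
theorem variant_triangular_not_product
    (f₁ f₂ η : ℝ → ℝ → ℝ)
    (hf₁ : f₁ = fun x y => max 0 (min (1 - |x|) (1 - |y|)))
    (hf₂ : f₂ = fun x y => max 0 (min (1 - |x - y|) (1 - |x + y|)))
    (hη : η = fun x y => (f₁ x y + f₂ x y) / 2) :
    ¬ ∃ g h : ℝ → ℝ, ∀ x y : ℝ, η x y = g x * h y := by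
  subst hf₁ hf₂ hη
  rintro ⟨g, h, H⟩
  have key : ∀ x y : ℝ,
      ((max 0 (min (1 - |x|) (1 - |y|)) + max 0 (min (1 - |x - y|) (1 - |x + y|))) / 2)
      * ((max 0 (min (1 - |(0:ℝ)|) (1 - |(0:ℝ)|)) + max 0 (min (1 - |(0:ℝ) - 0|) (1 - |(0:ℝ) + 0|))) / 2)
      = ((max 0 (min (1 - |x|) (1 - |(0:ℝ)|)) + max 0 (min (1 - |x - 0|) (1 - |x + 0|))) / 2)
      * ((max 0 (min (1 - |(0:ℝ)|) (1 - |y|)) + max 0 (min (1 - |(0:ℝ) - y|) (1 - |(0:ℝ) + y|))) / 2) := by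
    intro x y
    simp only [H]
    ring
  have := key (3/4) (1/4)
  norm_num [abs_of_nonneg, abs_of_pos] at this
end
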